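/- For all modal formulas φ and ψ, the following are equivalent: (1) φ → ψ is a valid implication that has a Craig interpolant (a modal formula θ with φ→θ valid, θ→ψ valid, and sig(θ) ⊆ sig(φ)∩sig(ψ)); (2) φ entails ψ along (sig(φ)∩sig(ψ))-bisimulations, i.e., for every pair of pointed Kripke models (M,w) and (N,v), if M,w ⊨ φ and (M,w) is (sig(φ)∩sig(ψ))-bisimilar to (N,v), then N,v ⊨ ψ. (Interpolant Existence Criterion.) -/

import Mathlib

inductive ModalFormula (α : Type) : Type
  | atom : α → ModalFormula α
  | top  : ModalFormula α
  | bot  : ModalFormula α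
  | neg  : ModalFormula α → ModalFormula α
  | or   : ModalFormula α → ModalFormula α → ModalFormula α
  | and  : ModalFormula α → ModalFormula α → ModalFormula α
  | dia  : ModalFormula α → ModalFormula α
  | box  : ModalFormula α → ModalFormula α

structure KripkeModel (α : Type) where
  World : Type
  R : World → World → Prop
  V : α → Set World

def Satisfies {α : Type} (M : KripkeModel α) : M.World → ModalFormula α → Prop
  | w, .atom p  => w ∈ M.V p
  | _, .top     => True
  | _, .bot     => False
  | w, .neg φ   => ¬ Satisfies M w φ
  | w, .or φ ψ  => Satisfies M w φ ∨ Satisfies M w ψ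
  | w, .and φ ψ => Satisfies M w φ ∧ Satisfies M w ψ
  | w, .dia φ   => ∃ v, M.R w v ∧ Satisfies M v φ
  | w, .box φ   => ∀ v, M.R w v → Satisfies M v φ

def Valid {α : Type} (φ : ModalFormula α) : Prop :=
  ∀ (M : KripkeModel α) (w : M.World), Satisfies M w φ

def ModalFormula.impl {α : Type} (φ ψ : ModalFormula α) : ModalFormula α :=
  .or (.neg φ) ψ

def sig {α : Type} : ModalFormula α → Set α
  | .atom p  => {p}
  | .top     => ∅
  | .bot     => ∅
  | .neg φ   => sig φ
  | .or φ ψ  => sig φ ∪ sig ψ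
  | .and φ ψ => sig φ ∪ sig ψ
  | .dia φ   => sig φ
  | .box φ   => sig φ

def IsBisimulation {α : Type} (τ : Set α) (M M' : KripkeModel α)
    (Z : M.World → M'.World → Prop) : Prop :=
  ∀ w w', Z w w' →
    (∀ p ∈ τ, (w ∈ M.V p ↔ w' ∈ M'.V p)) ∧
    (∀ v, M.R w v → ∃ v', M'.R w' v' ∧ Z v v') ∧
    (∀ v', M'.R w' v' → ∃ v, M.R w v ∧ Z v v')

def Bisimilar {α : Type} (τ : Set α) (M : KripkeModel α) (w : M.World)
    (M' : KripkeModel α) (w' : M'.World) : Prop :=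
  ∃ Z, IsBisimulation τ M M' Z ∧ Z w w'

/-!
Left to right is the invariance of modal formulas under bisimulation. For the converse take the
finite signature `τ = sig φ ∩ sig ψ` and `n = max (depth φ) (depth ψ)`. Up to depth `n` there are
only finitely many characteristic formulas over `τ`, and a world satisfies the characteristic
formula of another exactly when the two are `n`-bisimilar. The candidate interpolant is the
disjunction of the characteristic formulas of all `φ`-worlds. To apply the hypothesis to
`n`-bisimilar worlds, unravel both models into copies whose worlds carry a budget of remaining
steps: there `n`-bisimilarity becomes a genuine bisimulation, while formulas of depth at most `n`
keep their truth value.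
-/

open scoped Classical

noncomputable section

variable {α : Type}

namespace ModalFormula

def depth : ModalFormula α → ℕ
  | atom _ => 0
  | top => 0
  | bot => 0
  | neg φ => depth φ
  | or φ ψ => max (depth φ) (depth ψ)
  | and φ ψ => max (depth φ) (depth ψ)
  | dia φ => depth φ + 1
  | box φ => depth φ + 1

def conj (l : List (ModalFormula α)) : ModalFormula α := l.foldr and top

def disj (l : List (ModalFormula α)) : ModalFormula α := l.foldr or bot

end ModalFormula

open ModalFormula

section Basic

variable {M N : KripkeModel α} {w : M.World} {v : N.World}

theorem valid_impl_iff {φ ψ : ModalFormula α} :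
    Valid (φ.impl ψ) ↔ ∀ (M : KripkeModel α) (w : M.World), Satisfies M w φ → Satisfies M w ψ := by
  simp only [Valid, ModalFormula.impl, Satisfies, imp_iff_not_or]

theorem satisfies_conj {l : List (ModalFormula α)} :
    Satisfies M w (conj l) ↔ ∀ χ ∈ l, Satisfies M w χ := by
  induction l with
  | nil => simp [conj, Satisfies]
  | cons χ l ih => simp [conj, Satisfies, ← ih]

theorem satisfies_disj {l : List (ModalFormula α)} :
    Satisfies M w (disj l) ↔ ∃ χ ∈ l, Satisfies M w χ := by
  induction l with
  | nil => simp [disj, Satisfies]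
  | cons χ l ih => simp [disj, Satisfies, ← ih]

theorem sig_conj_subset {τ : Set α} {l : List (ModalFormula α)} (h : ∀ χ ∈ l, sig χ ⊆ τ) :
    sig (conj l) ⊆ τ := by
  induction l with
  | nil => simp [conj, sig]
  | cons χ l ih => simp_all [conj, sig]

theorem sig_disj_subset {τ : Set α} {l : List (ModalFormula α)} (h : ∀ χ ∈ l, sig χ ⊆ τ) :
    sig (disj l) ⊆ τ := by
  induction l with
  | nil => simp [disj, sig]
  | cons χ l ih => simp_all [disj, sig]

theorem sig_finite (χ : ModalFormula α) : (sig χ).Finite := by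
  induction χ with
  | atom p => exact Set.finite_singleton p
  | top | bot => exact Set.finite_empty
  | neg _ ih | dia _ ih | box _ ih => exact ih
  | or _ _ ih₁ ih₂ | and _ _ ih₁ ih₂ => exact ih₁.union ih₂

theorem satisfies_iff_of_isBisimulation {τ : Set α} {χ : ModalFormula α} (hχ : sig χ ⊆ τ)
    {Z : M.World → N.World → Prop} (hZ : IsBisimulation τ M N Z) (hwv : Z w v) :
    Satisfies M w χ ↔ Satisfies N v χ := by
  induction χ generalizing w v with
  | atom p => exact (hZ w v hwv).1 p (hχ rfl)
  | top | bot => exact Iff.rfl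
  | neg φ ih => exact not_congr (ih hχ hwv)
  | or φ ψ ih₁ ih₂ =>
    exact or_congr (ih₁ (Set.union_subset_iff.1 hχ).1 hwv) (ih₂ (Set.union_subset_iff.1 hχ).2 hwv)
  | and φ ψ ih₁ ih₂ =>
    exact and_congr (ih₁ (Set.union_subset_iff.1 hχ).1 hwv) (ih₂ (Set.union_subset_iff.1 hχ).2 hwv)
  | dia φ ih =>
    obtain ⟨-, forth, back⟩ := hZ w v hwv
    constructor
    · rintro ⟨w', hww', hw'⟩
      obtain ⟨v', hvv', hZ'⟩ := forth w' hww'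
      exact ⟨v', hvv', (ih hχ hZ').1 hw'⟩
    · rintro ⟨v', hvv', hv'⟩
      obtain ⟨w', hww', hZ'⟩ := back v' hvv'
      exact ⟨w', hww', (ih hχ hZ').2 hv'⟩
  | box φ ih =>
    obtain ⟨-, forth, back⟩ := hZ w v hwv
    constructor
    · intro h v' hvv'
      obtain ⟨w', hww', hZ'⟩ := back v' hvv'
      exact (ih hχ hZ').1 (h w' hww')
    · intro h w' hww'
      obtain ⟨v', hvv', hZ'⟩ := forth w' hww'
      exact (ih hχ hZ').2 (h v' hvv')

theorem Bisimilar.refl (τ : Set α) (M : KripkeModel α) (w : M.World) : Bisimilar τ M w M w :=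
  ⟨Eq, by
    rintro w _ rfl
    exact ⟨fun _ _ => Iff.rfl, fun v h => ⟨v, h, rfl⟩, fun v h => ⟨v, h, rfl⟩⟩, rfl⟩

end Basic

def EntailsAlongBisim (τ : Set α) (φ ψ : ModalFormula α) : Prop :=
  ∀ (M : KripkeModel α) (w : M.World) (N : KripkeModel α) (v : N.World),
    Satisfies M w φ → Bisimilar τ M w N v → Satisfies N v ψ

theorem entailsAlongBisim_of_interpolant {τ : Set α} {φ θ ψ : ModalFormula α}
    (hφθ : Valid (φ.impl θ)) (hθψ : Valid (θ.impl ψ)) (hθ : sig θ ⊆ τ) :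
    EntailsAlongBisim τ φ ψ := by
  rintro M w N v hφ ⟨Z, hZ, hwv⟩
  exact valid_impl_iff.1 hθψ N v
    ((satisfies_iff_of_isBisimulation hθ hZ hwv).1 (valid_impl_iff.1 hφθ M w hφ))

theorem EntailsAlongBisim.valid_impl {τ : Set α} {φ ψ : ModalFormula α}
    (h : EntailsAlongBisim τ φ ψ) : Valid (φ.impl ψ) :=
  valid_impl_iff.2 fun M w hφ => h M w M w hφ (Bisimilar.refl τ M w)

section CharFormula

variable (τ : Finset α)

def literal (S : Finset α) (p : α) : ModalFormula α :=
  if p ∈ S then atom p else neg (atom p)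

def diagram (S : Finset α) : ModalFormula α := conj (τ.toList.map (literal S))

def charSucc (S : Finset α) (T : Finset (ModalFormula α)) : ModalFormula α :=
  and (diagram τ S) (and (conj (T.toList.map dia)) (box (disj T.toList)))

/-- A finite set containing every `charFormula τ M n w`; its finiteness is what makes the
conjunction and disjunction in the next level of `charFormula` finite. -/
def charFormulas : ℕ → Finset (ModalFormula α)
  | 0 => τ.powerset.image (diagram τ)
  | n + 1 => (τ.powerset ×ˢ (charFormulas n).powerset).image fun ST => charSucc τ ST.1 ST.2

def atomsAt (M : KripkeModel α) (w : M.World) : Finset α := τ.filter (w ∈ M.V ·)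

def charFormula (M : KripkeModel α) : ℕ → M.World → ModalFormula α
  | 0, w => diagram τ (atomsAt τ M w)
  | n + 1, w => charSucc τ (atomsAt τ M w)
      ((charFormulas τ n).filter fun t => ∃ w', M.R w w' ∧ charFormula M n w' = t)

variable {τ} {M N : KripkeModel α}

theorem satisfies_diagram {w : M.World} {S : Finset α} :
    Satisfies M w (diagram τ S) ↔ ∀ p ∈ τ, (w ∈ M.V p ↔ p ∈ S) := by
  simp only [diagram, satisfies_conj, List.mem_map, Finset.mem_toList, forall_exists_index,
    and_imp, forall_apply_eq_imp_iff₂]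
  refine forall₂_congr fun p _ => ?_
  by_cases hp : p ∈ S <;> simp [literal, hp, Satisfies]

theorem sig_diagram_subset (S : Finset α) : sig (diagram τ S) ⊆ τ := by
  refine sig_conj_subset ?_
  simp only [List.mem_map, Finset.mem_toList, forall_exists_index, and_imp,
    forall_apply_eq_imp_iff₂]
  intro p hp
  by_cases hS : p ∈ S <;> simp [literal, hS, sig, hp]

theorem sig_subset_of_mem_charFormulas {n : ℕ} {t : ModalFormula α} (ht : t ∈ charFormulas τ n) :
    sig t ⊆ τ := by
  induction n generalizing t with
  | zero =>
    obtain ⟨S, -, rfl⟩ := Finset.mem_image.1 ht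
    exact sig_diagram_subset S
  | succ n ih =>
    obtain ⟨⟨S, T⟩, hST, rfl⟩ := Finset.mem_image.1 ht
    have hT : ∀ t ∈ T, sig t ⊆ τ := fun t h =>
      ih (Finset.mem_powerset.1 (Finset.mem_product.1 hST).2 h)
    refine Set.union_subset (sig_diagram_subset S) (Set.union_subset ?_ (sig_disj_subset ?_))
    · refine sig_conj_subset ?_
      simpa [sig] using hT
    · simpa using hT

theorem charFormula_mem_charFormulas (n : ℕ) (w : M.World) :
    charFormula τ M n w ∈ charFormulas τ n := by
  cases n with
  | zero => exact Finset.mem_image_of_mem _ (Finset.mem_powerset.2 (Finset.filter_subset _ _))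
  | succ n =>
    refine Finset.mem_image.2 ⟨(_, _), Finset.mem_product.2 ⟨?_, ?_⟩, rfl⟩ <;>
      exact Finset.mem_powerset.2 (Finset.filter_subset _ _)

theorem satisfies_charFormula_zero_iff {w : M.World} {v : N.World} :
    Satisfies N v (charFormula τ M 0 w) ↔ ∀ p ∈ τ, (v ∈ N.V p ↔ w ∈ M.V p) := by
  simp only [charFormula, satisfies_diagram, atomsAt, Finset.mem_filter]
  exact forall₂_congr fun p hp => by simp [hp]

theorem satisfies_charFormula_succ_iff {n : ℕ} {w : M.World} {v : N.World} :
    Satisfies N v (charFormula τ M (n + 1) w) ↔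
      (∀ p ∈ τ, (v ∈ N.V p ↔ w ∈ M.V p)) ∧
      (∀ w', M.R w w' → ∃ v', N.R v v' ∧ Satisfies N v' (charFormula τ M n w')) ∧
      (∀ v', N.R v v' → ∃ w', M.R w w' ∧ Satisfies N v' (charFormula τ M n w')) := by
  simp only [charFormula, charSucc, Satisfies, satisfies_diagram, satisfies_conj, satisfies_disj,
    atomsAt]
  refine and_congr (forall₂_congr fun p hp => by simp [hp]) (and_congr ?_ ?_)
  · simp [Satisfies, charFormula_mem_charFormulas]
  · simp [charFormula_mem_charFormulas]

theorem satisfies_charFormula (n : ℕ) (w : M.World) : Satisfies M w (charFormula τ M n w) := by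
  induction n generalizing w with
  | zero => exact satisfies_charFormula_zero_iff.2 fun _ _ => Iff.rfl
  | succ n ih =>
    exact satisfies_charFormula_succ_iff.2
      ⟨fun _ _ => Iff.rfl, fun w' h => ⟨w', h, ih w'⟩, fun w' h => ⟨w', h, ih w'⟩⟩

theorem atoms_iff_of_satisfies_charFormula {n : ℕ} {w : M.World} {v : N.World}
    (h : Satisfies N v (charFormula τ M n w)) : ∀ p ∈ τ, (v ∈ N.V p ↔ w ∈ M.V p) := by
  cases n with
  | zero => exact satisfies_charFormula_zero_iff.1 h
  | succ n => exact (satisfies_charFormula_succ_iff.1 h).1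

end CharFormula

def KripkeModel.truncation (M : KripkeModel α) : KripkeModel α where
  World := M.World × ℕ
  R x y := x.2 = y.2 + 1 ∧ M.R x.1 y.1
  V p := {x | x.1 ∈ M.V p}

theorem satisfies_truncation_iff {M : KripkeModel α} {χ : ModalFormula α} {k : ℕ} {w : M.World}
    (hχ : depth χ ≤ k) : Satisfies M.truncation (w, k) χ ↔ Satisfies M w χ := by
  induction χ generalizing k w with
  | atom | top | bot => exact Iff.rfl
  | neg φ ih => exact not_congr (ih hχ)
  | or φ ψ ih₁ ih₂ => exact or_congr (ih₁ (le_of_max_le_left hχ)) (ih₂ (le_of_max_le_right hχ))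
  | and φ ψ ih₁ ih₂ => exact and_congr (ih₁ (le_of_max_le_left hχ)) (ih₂ (le_of_max_le_right hχ))
  | dia φ ih =>
    obtain ⟨k, rfl⟩ : ∃ j, k = j + 1 := ⟨k - 1, by simp only [depth] at hχ; omega⟩
    have hφ : depth φ ≤ k := Nat.le_of_succ_le_succ hχ
    constructor
    · rintro ⟨⟨w', m⟩, ⟨hm, hww'⟩, hw'⟩
      cases Nat.succ_injective hm
      exact ⟨w', hww', (ih hφ).1 hw'⟩
    · rintro ⟨w', hww', hw'⟩
      exact ⟨(w', k), ⟨rfl, hww'⟩, (ih hφ).2 hw'⟩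
  | box φ ih =>
    obtain ⟨k, rfl⟩ : ∃ j, k = j + 1 := ⟨k - 1, by simp only [depth] at hχ; omega⟩
    have hφ : depth φ ≤ k := Nat.le_of_succ_le_succ hχ
    constructor
    · intro h w' hww'
      exact (ih hφ).1 (h (w', k) ⟨rfl, hww'⟩)
    · rintro h ⟨w', m⟩ ⟨hm, hww'⟩
      cases Nat.succ_injective hm
      exact (ih hφ).2 (h w' hww')

theorem bisimilar_truncation_of_satisfies_charFormula {τ : Finset α} {M N : KripkeModel α}
    {n : ℕ} {w : M.World} {v : N.World} (h : Satisfies N v (charFormula τ M n w)) :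
    Bisimilar τ M.truncation (w, n) N.truncation (v, n) := by
  refine ⟨fun x y => x.2 = y.2 ∧ Satisfies N y.1 (charFormula τ M x.2 x.1), ?_, rfl, h⟩
  rintro ⟨w, m⟩ ⟨v, _⟩ ⟨rfl, hv⟩
  refine ⟨fun p hp => (atoms_iff_of_satisfies_charFormula hv p hp).symm, ?_, ?_⟩
  · rintro ⟨w', m⟩ ⟨rfl, hww'⟩
    obtain ⟨v', hvv', hv'⟩ := (satisfies_charFormula_succ_iff.1 hv).2.1 w' hww'
    exact ⟨(v', m), ⟨rfl, hvv'⟩, rfl, hv'⟩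
  · rintro ⟨v', m⟩ ⟨rfl, hvv'⟩
    obtain ⟨w', hww', hv'⟩ := (satisfies_charFormula_succ_iff.1 hv).2.2 v' hvv'
    exact ⟨(w', m), ⟨rfl, hww'⟩, rfl, hv'⟩

def charDisj (τ : Finset α) (n : ℕ) (φ : ModalFormula α) : ModalFormula α :=
  disj ((charFormulas τ n).filter fun t =>
    ∃ (M : KripkeModel α) (w : M.World), Satisfies M w φ ∧ charFormula τ M n w = t).toList

section CharDisj

variable {τ : Finset α} {n : ℕ} {φ : ModalFormula α}

theorem satisfies_charDisj_iff {N : KripkeModel α} {v : N.World} :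
    Satisfies N v (charDisj τ n φ) ↔
      ∃ (M : KripkeModel α) (w : M.World),
        Satisfies M w φ ∧ Satisfies N v (charFormula τ M n w) := by
  simp [charDisj, satisfies_disj, charFormula_mem_charFormulas]

theorem valid_impl_charDisj : Valid (φ.impl (charDisj τ n φ)) :=
  valid_impl_iff.2 fun M w hw => satisfies_charDisj_iff.2 ⟨M, w, hw, satisfies_charFormula n w⟩

theorem sig_charDisj_subset : sig (charDisj τ n φ) ⊆ τ :=
  sig_disj_subset fun _ ht =>
    sig_subset_of_mem_charFormulas (Finset.mem_filter.1 (Finset.mem_toList.1 ht)).1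

theorem EntailsAlongBisim.valid_charDisj_impl {ψ : ModalFormula α} (h : EntailsAlongBisim τ φ ψ)
    (hφ : depth φ ≤ n) (hψ : depth ψ ≤ n) : Valid ((charDisj τ n φ).impl ψ) := by
  refine valid_impl_iff.2 fun N v hv => ?_
  obtain ⟨M, w, hw, hv⟩ := satisfies_charDisj_iff.1 hv
  exact (satisfies_truncation_iff hψ).1 <|
    h _ _ _ _ ((satisfies_truncation_iff hφ).2 hw)
      (bisimilar_truncation_of_satisfies_charFormula hv)

end CharDisj

end

/-- Interpolant Existence Criterion. -/
theorem interpolant_existence_criterion {α : Type} (φ ψ : ModalFormula α) :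
    (Valid (φ.impl ψ) ∧
      ∃ θ : ModalFormula α,
        Valid (φ.impl θ) ∧ Valid (θ.impl ψ) ∧ sig θ ⊆ sig φ ∩ sig ψ) ↔
    (∀ (M : KripkeModel α) (w : M.World) (N : KripkeModel α) (v : N.World),
      Satisfies M w φ → Bisimilar (sig φ ∩ sig ψ) M w N v → Satisfies N v ψ) := by
  refine ⟨fun ⟨_, θ, hφθ, hθψ, hθ⟩ => entailsAlongBisim_of_interpolant hφθ hθψ hθ, fun h => ?_⟩
  obtain ⟨τ, hτ⟩ := ((sig_finite φ).inter_of_left (sig ψ)).exists_finset_coe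
  rw [← hτ] at h ⊢
  exact ⟨EntailsAlongBisim.valid_impl h, charDisj τ (max φ.depth ψ.depth) φ, valid_impl_charDisj,
    EntailsAlongBisim.valid_charDisj_impl h (le_max_left _ _) (le_max_right _ _),
    sig_charDisj_subset⟩
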